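/- Let $u^\mu = \gamma(1,v^i)$ be a stationary, shearless, incompressible flow on an ultrastatic spacetime (so $v$ is a Killing field of the spatial metric). If the heat flux $q^\mu = -\kappa P^{\mu\nu}(\partial_\nu + a_\nu)\mathcal{T}$ vanishes (with $\kappa \neq 0$), then the local temperature satisfies $\mathcal{T} = \tau \gamma$ for some constant $\tau$. -/

import Mathlib

noncomputable section

/-- Partial derivative of a scalar function on coordinate space `Fin n → ℝ`. -/
def pd {n : ℕ} (i : Fin n) (f : (Fin n → ℝ) → ℝ) (x : Fin n → ℝ) : ℝ :=
  fderiv ℝ f x (Pi.single i 1)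

/-- Christoffel symbols Γ^l_{ij} of a metric `g` with inverse `ginv`. -/
def christoffel {n : ℕ} (g ginv : (Fin n → ℝ) → Matrix (Fin n) (Fin n) ℝ)
    (l i j : Fin n) (x : Fin n → ℝ) : ℝ :=
  (1/2) * ∑ r, ginv x l r *
    (pd i (fun y => g y r j) x + pd j (fun y => g y r i) x - pd r (fun y => g y i j) x)

/-- Covariant derivative ∇_i u^j of a vector field. -/
def covDerivVec {n : ℕ} (g ginv : (Fin n → ℝ) → Matrix (Fin n) (Fin n) ℝ)
    (u : (Fin n → ℝ) → Fin n → ℝ) (i j : Fin n) (x : Fin n → ℝ) : ℝ :=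
  pd i (fun y => u y j) x + ∑ r, christoffel g ginv j i r x * u x r

/-- Covariant derivative ∇_i w_j of a covector field. -/
def covDerivCovec {n : ℕ} (g ginv : (Fin n → ℝ) → Matrix (Fin n) (Fin n) ℝ)
    (w : (Fin n → ℝ) → Fin n → ℝ) (i j : Fin n) (x : Fin n → ℝ) : ℝ :=
  pd i (fun y => w y j) x - ∑ r, christoffel g ginv r i j x * w x r

/-- Expansion ϑ = ∇_μ u^μ. -/
def expansion {n : ℕ} (g ginv : (Fin n → ℝ) → Matrix (Fin n) (Fin n) ℝ)
    (u : (Fin n → ℝ) → Fin n → ℝ) (x : Fin n → ℝ) : ℝ :=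
  ∑ i, covDerivVec g ginv u i i x

/-- Projector P^{μν} = g^{μν} + u^μ u^ν. -/
def proj {n : ℕ} (ginv : (Fin n → ℝ) → Matrix (Fin n) (Fin n) ℝ)
    (u : (Fin n → ℝ) → Fin n → ℝ) (μ ν : Fin n) (x : Fin n → ℝ) : ℝ :=
  ginv x μ ν + u x μ * u x ν

/-- Shear tensor σ^{μν} in spacetime dimension `d`:
σ^{μν} = ½(P^{μρ}∇_ρ u^ν + P^{νρ}∇_ρ u^μ) - ϑ P^{μν}/(d-1). -/
def shear {n : ℕ} (d : ℕ) (g ginv : (Fin n → ℝ) → Matrix (Fin n) (Fin n) ℝ)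
    (u : (Fin n → ℝ) → Fin n → ℝ) (μ ν : Fin n) (x : Fin n → ℝ) : ℝ :=
  (1/2) * ((∑ ρ, proj ginv u μ ρ x * covDerivVec g ginv u ρ ν x)
    + (∑ ρ, proj ginv u ν ρ x * covDerivVec g ginv u ρ μ x))
    - (1/((d : ℝ) - 1)) * expansion g ginv u x * proj ginv u μ ν x

/-- Projection of a spacetime point to its spatial coordinates. -/
def sp {n : ℕ} (x : Fin (n+1) → ℝ) : Fin n → ℝ := fun i => x i.succ

/-- Lift of a spatial metric to the ultrastatic spacetime metric
g = -dt² + ḡ_{ij} dx^i dx^j (block diagonal, time-independent). -/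
def liftMetric {n : ℕ} (gb : (Fin n → ℝ) → Matrix (Fin n) (Fin n) ℝ) :
    (Fin (n+1) → ℝ) → Matrix (Fin (n+1)) (Fin (n+1)) ℝ :=
  fun x μ ν =>
    Fin.cases (Fin.cases (-1 : ℝ) (fun _ => 0) ν)
      (fun i => Fin.cases (0 : ℝ) (fun j => gb (sp x) i j) ν) μ

/-- Squared speed v² = ḡ_{ij} v^i v^j. -/
def vsq {n : ℕ} (gb : (Fin n → ℝ) → Matrix (Fin n) (Fin n) ℝ)
    (v : (Fin n → ℝ) → Fin n → ℝ) (y : Fin n → ℝ) : ℝ :=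
  ∑ i, ∑ j, gb y i j * v y i * v y j

/-- Lorentz factor γ = (1 - v²)^{-1/2}. -/
def lorentz {n : ℕ} (gb : (Fin n → ℝ) → Matrix (Fin n) (Fin n) ℝ)
    (v : (Fin n → ℝ) → Fin n → ℝ) (y : Fin n → ℝ) : ℝ :=
  (Real.sqrt (1 - vsq gb v y))⁻¹

/-- The stationary velocity field u^μ = γ(1, v^i) on the ultrastatic spacetime. -/
def uvec {n : ℕ} (gb : (Fin n → ℝ) → Matrix (Fin n) (Fin n) ℝ)
    (v : (Fin n → ℝ) → Fin n → ℝ) (x : Fin (n+1) → ℝ) : Fin (n+1) → ℝ :=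
  fun μ => Fin.cases (lorentz gb v (sp x)) (fun i => lorentz gb v (sp x) * v (sp x) i) μ

/-- Index lowering of a spatial vector field: v_j = ḡ_{jk} v^k. -/
def flat {n : ℕ} (gb : (Fin n → ℝ) → Matrix (Fin n) (Fin n) ℝ)
    (v : (Fin n → ℝ) → Fin n → ℝ) (y : Fin n → ℝ) : Fin n → ℝ :=
  fun j => ∑ k, gb y j k * v y k

/-- `v` is a Killing field of `(Σ, ḡ)`: ∇̄_i v_j + ∇̄_j v_i = 0. -/
def IsKilling {n : ℕ} (gb gbinv : (Fin n → ℝ) → Matrix (Fin n) (Fin n) ℝ)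
    (v : (Fin n → ℝ) → Fin n → ℝ) : Prop :=
  ∀ (y : Fin n → ℝ) (i j : Fin n),
    covDerivCovec gb gbinv (flat gb v) i j y + covDerivCovec gb gbinv (flat gb v) j i y = 0


/-- Acceleration a^μ = u^ν ∇_ν u^μ. -/
def accel {n : ℕ} (g ginv : (Fin n → ℝ) → Matrix (Fin n) (Fin n) ℝ)
    (u : (Fin n → ℝ) → Fin n → ℝ) (μ : Fin n) (x : Fin n → ℝ) : ℝ :=
  ∑ ν, u x ν * covDerivVec g ginv u ν μ x

/-- Lowered acceleration a_ν = g_{νρ} a^ρ. -/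
def accelLow {n : ℕ} (g ginv : (Fin n → ℝ) → Matrix (Fin n) (Fin n) ℝ)
    (u : (Fin n → ℝ) → Fin n → ℝ) (ν : Fin n) (x : Fin n → ℝ) : ℝ :=
  ∑ ρ, g x ν ρ * accel g ginv u ρ x

/-- Heat flux q^μ = -κ P^{μν}(∂_ν + a_ν) 𝒯. -/
def heatFlux {n : ℕ} (κ : ℝ) (g ginv : (Fin n → ℝ) → Matrix (Fin n) (Fin n) ℝ)
    (u : (Fin n → ℝ) → Fin n → ℝ) (T : (Fin n → ℝ) → ℝ) (μ : Fin n) (x : Fin n → ℝ) : ℝ :=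
  -κ * ∑ ν, proj ginv u μ ν x * (pd ν T x + accelLow g ginv u ν x * T x)

namespace HFaux
variable {n : ℕ}

lemma pd_eq_of_hasFDerivAt {f : (Fin n → ℝ) → ℝ} {L : (Fin n → ℝ) →L[ℝ] ℝ} {x : Fin n → ℝ}
    (h : HasFDerivAt f L x) (i : Fin n) : pd i f x = L (Pi.single i 1) := by
  rw [pd, h.fderiv]

lemma pd_const (i : Fin n) (x : Fin n → ℝ) (c : ℝ) : pd i (fun _ => c) x = 0 := by
  simp [pd]

lemma pd_mul {f g : (Fin n → ℝ) → ℝ} {x : Fin n → ℝ}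
    (hf : DifferentiableAt ℝ f x) (hg : DifferentiableAt ℝ g x) (i : Fin n) :
    pd i (fun y => f y * g y) x = pd i f x * g x + f x * pd i g x := by
  rw [pd_eq_of_hasFDerivAt (hf.hasFDerivAt.fun_mul hg.hasFDerivAt) i]
  simp [pd]
  ring

lemma pd_sum {ι : Type*} (s : Finset ι) {f : ι → (Fin n → ℝ) → ℝ} {x : Fin n → ℝ}
    (hf : ∀ j ∈ s, DifferentiableAt ℝ (f j) x) (i : Fin n) :
    pd i (fun y => ∑ j ∈ s, f j y) x = ∑ j ∈ s, pd i (f j) x := by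
  rw [pd, fderiv_fun_sum hf]
  simp [pd]

def spL (n : ℕ) : (Fin (n+1) → ℝ) →L[ℝ] (Fin n → ℝ) :=
  ContinuousLinearMap.pi fun i => ContinuousLinearMap.proj i.succ

lemma spL_apply (x : Fin (n+1) → ℝ) : spL n x = sp x := rfl

lemma sp_single_zero : sp (Pi.single (0 : Fin (n+1)) (1:ℝ)) = 0 := by
  funext i
  simp [sp, Pi.single_apply, (Fin.succ_ne_zero i)]

lemma sp_single_succ (j : Fin n) : sp (Pi.single j.succ (1:ℝ)) = Pi.single j 1 := by
  funext i
  simp [sp, Pi.single_apply, Fin.succ_inj]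

lemma hasFDerivAt_comp_sp {f : (Fin n → ℝ) → ℝ} {x : Fin (n+1) → ℝ}
    (hf : DifferentiableAt ℝ f (sp x)) :
    HasFDerivAt (fun x => f (sp x)) ((fderiv ℝ f (sp x)).comp (spL n)) x := by
  exact (hf.hasFDerivAt.comp x ((spL n).hasFDerivAt : HasFDerivAt (spL n) (spL n) x) : _)

lemma pd_comp_sp_zero {f : (Fin n → ℝ) → ℝ} {x : Fin (n+1) → ℝ}
    (hf : DifferentiableAt ℝ f (sp x)) :
    pd (0 : Fin (n+1)) (fun x => f (sp x)) x = 0 := by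
  rw [pd_eq_of_hasFDerivAt (hasFDerivAt_comp_sp hf)]
  have : spL n (Pi.single (0 : Fin (n+1)) (1:ℝ)) = 0 := by rw [spL_apply, sp_single_zero]
  simp [ContinuousLinearMap.comp_apply, this]

lemma pd_comp_sp_succ {f : (Fin n → ℝ) → ℝ} {x : Fin (n+1) → ℝ}
    (hf : DifferentiableAt ℝ f (sp x)) (j : Fin n) :
    pd j.succ (fun x => f (sp x)) x = pd j f (sp x) := by
  rw [pd_eq_of_hasFDerivAt (hasFDerivAt_comp_sp hf)]
  have : spL n (Pi.single (j.succ : Fin (n+1)) (1:ℝ)) = Pi.single j 1 := by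
    rw [spL_apply, sp_single_succ]
  simp [ContinuousLinearMap.comp_apply, this, pd]

lemma differentiableAt_comp_sp {f : (Fin n → ℝ) → ℝ} {x : Fin (n+1) → ℝ}
    (hf : DifferentiableAt ℝ f (sp x)) :
    DifferentiableAt ℝ (fun x => f (sp x)) x :=
  (hasFDerivAt_comp_sp hf).differentiableAt

lemma clm_eq_zero_of_single (L : (Fin n → ℝ) →L[ℝ] ℝ) (h : ∀ i, L (Pi.single i 1) = 0) :
    L = 0 := by
  ext x
  have hx : x = ∑ i, x i • (Pi.single i (1:ℝ) : Fin n → ℝ) := by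
    funext j
    simp [Finset.sum_apply, Pi.single_apply]
  rw [hx]
  simp [h]
section Spatial
variable {n : ℕ} {gb gbinv : (Fin n → ℝ) → Matrix (Fin n) (Fin n) ℝ}
  {v : (Fin n → ℝ) → Fin n → ℝ}

lemma flat_diff (hg : ∀ i j, Differentiable ℝ (fun y => gb y i j))
    (hv : ∀ i, Differentiable ℝ (fun y => v y i)) (j : Fin n) :
    Differentiable ℝ (fun y => flat gb v y j) := by
  unfold flat
  exact Differentiable.fun_sum fun k _ => (hg j k).fun_mul (hv k)

lemma vsq_diff (hg : ∀ i j, Differentiable ℝ (fun y => gb y i j))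
    (hv : ∀ i, Differentiable ℝ (fun y => v y i)) :
    Differentiable ℝ (vsq gb v) := by
  unfold vsq
  exact Differentiable.fun_sum fun i _ => Differentiable.fun_sum fun j _ =>
    (((hg i j).fun_mul (hv i)).fun_mul (hv j))

lemma christoffel_contract (hinv : ∀ y, gb y * gbinv y = 1) (y : Fin n → ℝ) (m i j : Fin n) :
    ∑ r, gb y m r * christoffel gb gbinv r i j y
      = (1/2) * (pd i (fun z => gb z m j) y + pd j (fun z => gb z m i) y
          - pd m (fun z => gb z i j) y) := by
  have key : ∀ s, (∑ r, gb y m r * gbinv y r s) = if m = s then 1 else 0 := by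
    intro s
    have h := congrArg (fun M => M m s) (hinv y)
    simpa [Matrix.mul_apply, Matrix.one_apply] using h
  calc ∑ r, gb y m r * christoffel gb gbinv r i j y
      = ∑ r, ∑ s, (gb y m r * gbinv y r s) *
          ((1/2) * (pd i (fun z => gb z s j) y + pd j (fun z => gb z s i) y
            - pd s (fun z => gb z i j) y)) := by
        refine Finset.sum_congr rfl fun r _ => ?_
        rw [christoffel, Finset.mul_sum, Finset.mul_sum]
        exact Finset.sum_congr rfl fun s _ => by ring
    _ = ∑ s, (∑ r, gb y m r * gbinv y r s) *
          ((1/2) * (pd i (fun z => gb z s j) y + pd j (fun z => gb z s i) y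
            - pd s (fun z => gb z i j) y)) := by
        rw [Finset.sum_comm]
        exact Finset.sum_congr rfl fun s _ => by rw [Finset.sum_mul]
    _ = (1/2) * (pd i (fun z => gb z m j) y + pd j (fun z => gb z m i) y
          - pd m (fun z => gb z i j) y) := by
        simp [key, ite_mul]

lemma pd_gb_compat (hinv : ∀ y, gb y * gbinv y = 1)
    (hsymm : ∀ (a b : Fin n), (fun z => gb z a b) = (fun z => gb z b a))
    (y : Fin n → ℝ) (i j m : Fin n) :
    pd i (fun z => gb z j m) y
      = (∑ r, gb y m r * christoffel gb gbinv r i j y)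
        + (∑ r, gb y j r * christoffel gb gbinv r i m y) := by
  rw [christoffel_contract hinv y m i j, christoffel_contract hinv y j i m]
  have e1 : pd i (fun z => gb z m j) y = pd i (fun z => gb z j m) y := by rw [hsymm m j]
  have e2 : pd j (fun z => gb z m i) y = pd j (fun z => gb z i m) y := by rw [hsymm m i]
  have e3 : pd m (fun z => gb z i j) y = pd m (fun z => gb z j i) y := by rw [hsymm i j]
  rw [e1, e2, e3]
  ring

lemma lower_covDeriv (hinv : ∀ y, gb y * gbinv y = 1)
    (hsymm : ∀ (a b : Fin n), (fun z => gb z a b) = (fun z => gb z b a))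
    (hg : ∀ i j, Differentiable ℝ (fun y => gb y i j))
    (hv : ∀ i, Differentiable ℝ (fun y => v y i))
    (y : Fin n → ℝ) (i j : Fin n) :
    covDerivCovec gb gbinv (flat gb v) i j y
      = ∑ k, gb y j k * covDerivVec gb gbinv v i k y := by
  have hsym2 : ∀ a b, gb y a b = gb y b a := fun a b => congrFun (hsymm a b) y
  have hpd_flat : pd i (fun z => flat gb v z j) y
      = ∑ k, (pd i (fun z => gb z j k) y * v y k + gb y j k * pd i (fun z => v z k) y) := by
    unfold flat
    rw [pd_sum _ (fun k _ => ((hg j k).fun_mul (hv k)).differentiableAt)]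
    exact Finset.sum_congr rfl fun k _ =>
      pd_mul ((hg j k).differentiableAt) ((hv k).differentiableAt) i
  have hA : ∑ k, (pd i (fun z => gb z j k) y * v y k + gb y j k * pd i (fun z => v z k) y)
      = (∑ k, (∑ r, gb y k r * christoffel gb gbinv r i j y) * v y k)
        + (∑ k, (∑ r, gb y j r * christoffel gb gbinv r i k y) * v y k)
        + ∑ k, gb y j k * pd i (fun z => v z k) y := by
    rw [Finset.sum_add_distrib]
    congr 1
    rw [← Finset.sum_add_distrib]
    refine Finset.sum_congr rfl fun k _ => ?_
    rw [pd_gb_compat hinv hsymm y i j k, add_mul]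
  have hG1 : ∑ k, (∑ r, gb y k r * christoffel gb gbinv r i j y) * v y k
      = ∑ r, christoffel gb gbinv r i j y * flat gb v y r := by
    unfold flat
    calc ∑ k, (∑ r, gb y k r * christoffel gb gbinv r i j y) * v y k
        = ∑ k, ∑ r, gb y k r * christoffel gb gbinv r i j y * v y k := by
          exact Finset.sum_congr rfl fun k _ => Finset.sum_mul _ _ _
      _ = ∑ r, ∑ k, gb y k r * christoffel gb gbinv r i j y * v y k := Finset.sum_comm
      _ = ∑ r, christoffel gb gbinv r i j y * ∑ k, gb y r k * v y k := by
          refine Finset.sum_congr rfl fun r _ => ?_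
          rw [Finset.mul_sum]
          refine Finset.sum_congr rfl fun k _ => ?_
          rw [hsym2 k r]; ring
  have hG2 : ∑ k, (∑ r, gb y j r * christoffel gb gbinv r i k y) * v y k
      = ∑ k, gb y j k * ∑ r, christoffel gb gbinv k i r y * v y r := by
    calc ∑ k, (∑ r, gb y j r * christoffel gb gbinv r i k y) * v y k
        = ∑ k, ∑ r, gb y j r * (christoffel gb gbinv r i k y * v y k) := by
          refine Finset.sum_congr rfl fun k _ => ?_
          rw [Finset.sum_mul]
          exact Finset.sum_congr rfl fun r _ => by ring
      _ = ∑ r, ∑ k, gb y j r * (christoffel gb gbinv r i k y * v y k) := Finset.sum_comm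
      _ = ∑ r, gb y j r * ∑ k, christoffel gb gbinv r i k y * v y k := by
          exact Finset.sum_congr rfl fun r _ => (Finset.mul_sum _ _ _).symm
  have hRHS : ∑ k, gb y j k * covDerivVec gb gbinv v i k y
      = ∑ k, gb y j k * pd i (fun z => v z k) y
        + ∑ k, gb y j k * ∑ r, christoffel gb gbinv k i r y * v y r := by
    rw [← Finset.sum_add_distrib]
    refine Finset.sum_congr rfl fun k _ => ?_
    rw [covDerivVec, mul_add]
  rw [covDerivCovec, hpd_flat, hA, hG1, hG2, hRHS]
  ring

lemma vsq_eq : vsq gb v = fun y => ∑ k, v y k * flat gb v y k := by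
  funext y
  unfold vsq flat
  refine Finset.sum_congr rfl fun k _ => ?_
  rw [Finset.mul_sum]
  exact Finset.sum_congr rfl fun j _ => by ring

lemma pd_vsq (hinv : ∀ y, gb y * gbinv y = 1)
    (hsymm : ∀ (a b : Fin n), (fun z => gb z a b) = (fun z => gb z b a))
    (hg : ∀ i j, Differentiable ℝ (fun y => gb y i j))
    (hv : ∀ i, Differentiable ℝ (fun y => v y i))
    (y : Fin n → ℝ) (i : Fin n) :
    pd i (vsq gb v) y
      = 2 * ∑ k, v y k * covDerivCovec gb gbinv (flat gb v) i k y := by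
  have hsym2 : ∀ a b, gb y a b = gb y b a := fun a b => congrFun (hsymm a b) y
  have hfd : ∀ k, DifferentiableAt ℝ (fun z => flat gb v z k) y :=
    fun k => (flat_diff hg hv k).differentiableAt
  rw [show pd i (vsq gb v) y = pd i (fun y => ∑ k, v y k * flat gb v y k) y from by
    rw [vsq_eq]]
  rw [pd_sum _ (fun k _ => ((hv k).differentiableAt.fun_mul (hfd k)))]
  have hterm : ∀ k, pd i (fun z => v z k * flat gb v z k) y
      = pd i (fun z => v z k) y * flat gb v y k + v y k * pd i (fun z => flat gb v z k) y :=
    fun k => pd_mul ((hv k).differentiableAt) (hfd k) i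
  rw [Finset.sum_congr rfl fun k _ => hterm k, Finset.sum_add_distrib]
  have hx1 : ∀ k, pd i (fun z => v z k) y
      = covDerivVec gb gbinv v i k y - ∑ r, christoffel gb gbinv k i r y * v y r := by
    intro k; rw [covDerivVec]; ring
  have hx2 : ∀ k, pd i (fun z => flat gb v z k) y
      = covDerivCovec gb gbinv (flat gb v) i k y
        + ∑ r, christoffel gb gbinv r i k y * flat gb v y r := by
    intro k; rw [covDerivCovec]; ring
  have h1 : ∑ k, pd i (fun z => v z k) y * flat gb v y k
      = ∑ k, covDerivVec gb gbinv v i k y * flat gb v y k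
        - ∑ k, (∑ r, christoffel gb gbinv k i r y * v y r) * flat gb v y k := by
    rw [← Finset.sum_sub_distrib]
    refine Finset.sum_congr rfl fun k _ => ?_
    rw [hx1 k]; ring
  have h2 : ∑ k, v y k * pd i (fun z => flat gb v z k) y
      = ∑ k, v y k * covDerivCovec gb gbinv (flat gb v) i k y
        + ∑ k, v y k * ∑ r, christoffel gb gbinv r i k y * flat gb v y r := by
    rw [← Finset.sum_add_distrib]
    refine Finset.sum_congr rfl fun k _ => ?_
    rw [hx2 k]; ring
  have hcancel : ∑ k, (∑ r, christoffel gb gbinv k i r y * v y r) * flat gb v y k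
      = ∑ k, v y k * ∑ r, christoffel gb gbinv r i k y * flat gb v y r := by
    calc ∑ k, (∑ r, christoffel gb gbinv k i r y * v y r) * flat gb v y k
        = ∑ k, ∑ r, v y r * (christoffel gb gbinv k i r y * flat gb v y k) := by
          refine Finset.sum_congr rfl fun k _ => ?_
          rw [Finset.sum_mul]
          exact Finset.sum_congr rfl fun r _ => by ring
      _ = ∑ r, ∑ k, v y r * (christoffel gb gbinv k i r y * flat gb v y k) := Finset.sum_comm
      _ = ∑ r, v y r * ∑ k, christoffel gb gbinv k i r y * flat gb v y k := by
          exact Finset.sum_congr rfl fun r _ => (Finset.mul_sum _ _ _).symm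
  have hlow : ∑ k, covDerivVec gb gbinv v i k y * flat gb v y k
      = ∑ k, v y k * covDerivCovec gb gbinv (flat gb v) i k y := by
    calc ∑ k, covDerivVec gb gbinv v i k y * flat gb v y k
        = ∑ k, ∑ m, covDerivVec gb gbinv v i k y * (gb y k m * v y m) := by
          refine Finset.sum_congr rfl fun k _ => ?_
          rw [flat, Finset.mul_sum]
      _ = ∑ m, ∑ k, covDerivVec gb gbinv v i k y * (gb y k m * v y m) := Finset.sum_comm
      _ = ∑ m, v y m * ∑ k, gb y m k * covDerivVec gb gbinv v i k y := by
          refine Finset.sum_congr rfl fun m _ => ?_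
          rw [Finset.mul_sum]
          refine Finset.sum_congr rfl fun k _ => ?_
          rw [hsym2 k m]; ring
      _ = ∑ m, v y m * covDerivCovec gb gbinv (flat gb v) i m y := by
          refine Finset.sum_congr rfl fun m _ => ?_
          rw [← lower_covDeriv hinv hsymm hg hv y i m]
  rw [h1, h2, hcancel, hlow]
  ring

lemma lorentz_pd (hg : ∀ i j, Differentiable ℝ (fun y => gb y i j))
    (hv : ∀ i, Differentiable ℝ (fun y => v y i))
    (hvlt : ∀ y, vsq gb v y < 1) (y : Fin n → ℝ) (i : Fin n) :
    pd i (lorentz gb v) y = (1/2) * (lorentz gb v y)^3 * pd i (vsq gb v) y := by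
  have hS : 0 < 1 - vsq gb v y := by linarith [hvlt y]
  have hsq_pos : 0 < Real.sqrt (1 - vsq gb v y) := Real.sqrt_pos.mpr hS
  have hdvsq : HasFDerivAt (vsq gb v) (fderiv ℝ (vsq gb v) y) y :=
    ((vsq_diff hg hv) y).hasFDerivAt
  have h1 : HasFDerivAt (fun z => 1 - vsq gb v z) (-(fderiv ℝ (vsq gb v) y)) y :=
    hdvsq.const_sub 1
  have h2 : HasFDerivAt (fun z => Real.sqrt (1 - vsq gb v z))
      ((1 / (2 * Real.sqrt (1 - vsq gb v y))) • (-(fderiv ℝ (vsq gb v) y))) y :=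
    h1.sqrt hS.ne'
  have h3 : HasFDerivAt (lorentz gb v)
      ((-(Real.sqrt (1 - vsq gb v y) ^ 2)⁻¹) •
        ((1 / (2 * Real.sqrt (1 - vsq gb v y))) • (-(fderiv ℝ (vsq gb v) y)))) y := by
    have := (hasDerivAt_inv hsq_pos.ne').comp_hasFDerivAt y h2
    exact this
  rw [pd_eq_of_hasFDerivAt h3 i]
  have hsq2 : Real.sqrt (1 - vsq gb v y) ^ 2 = 1 - vsq gb v y := Real.sq_sqrt hS.le
  have : pd i (vsq gb v) y = (fderiv ℝ (vsq gb v) y) (Pi.single i 1) := rfl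
  rw [lorentz]
  simp only [ContinuousLinearMap.smul_apply, ContinuousLinearMap.neg_apply, ← this]
  generalize hP : pd i (vsq gb v) y = P
  generalize hs : Real.sqrt (1 - vsq gb v y) = s at hsq_pos ⊢
  field_simp
  simp only [smul_eq_mul]
  field_simp

end Spatial
section Lift
variable {n : ℕ} {gb gbinv : (Fin n → ℝ) → Matrix (Fin n) (Fin n) ℝ}
  {v : (Fin n → ℝ) → Fin n → ℝ}

lemma lm_00 (A : (Fin n → ℝ) → Matrix (Fin n) (Fin n) ℝ) (x : Fin (n+1) → ℝ) :
    liftMetric A x 0 0 = -1 := by simp [liftMetric]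

lemma lm_0s (A : (Fin n → ℝ) → Matrix (Fin n) (Fin n) ℝ) (x : Fin (n+1) → ℝ) (j : Fin n) :
    liftMetric A x 0 j.succ = 0 := by simp [liftMetric]

lemma lm_s0 (A : (Fin n → ℝ) → Matrix (Fin n) (Fin n) ℝ) (x : Fin (n+1) → ℝ) (i : Fin n) :
    liftMetric A x i.succ 0 = 0 := by simp [liftMetric]

lemma lm_ss (A : (Fin n → ℝ) → Matrix (Fin n) (Fin n) ℝ) (x : Fin (n+1) → ℝ) (i j : Fin n) :
    liftMetric A x i.succ j.succ = A (sp x) i j := by simp [liftMetric]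

lemma pd_lift_left0 (A : (Fin n → ℝ) → Matrix (Fin n) (Fin n) ℝ)
    (μ : Fin (n+1)) (s : Fin (n+1)) (x : Fin (n+1) → ℝ) :
    pd μ (fun x => liftMetric A x 0 s) x = 0 := by
  have h : (fun x : Fin (n+1) → ℝ => liftMetric A x 0 s)
      = fun _ => (Fin.cases (-1 : ℝ) (fun _ => 0) s) := by
    funext z; simp [liftMetric]
  rw [h, pd_const]

lemma pd_lift_right0 (A : (Fin n → ℝ) → Matrix (Fin n) (Fin n) ℝ)
    (μ : Fin (n+1)) (r : Fin (n+1)) (x : Fin (n+1) → ℝ) :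
    pd μ (fun x => liftMetric A x r 0) x = 0 := by
  have h : (fun x : Fin (n+1) → ℝ => liftMetric A x r 0)
      = fun _ => (Fin.cases (-1 : ℝ) (fun _ => 0) r) := by
    funext z
    induction r using Fin.cases <;> simp [liftMetric]
  rw [h, pd_const]

lemma pd_lift_time (hg : ∀ i j, Differentiable ℝ (fun y => gb y i j))
    (r s : Fin (n+1)) (x : Fin (n+1) → ℝ) :
    pd 0 (fun x => liftMetric gb x r s) x = 0 := by
  induction r using Fin.cases with
  | zero => exact pd_lift_left0 gb 0 s x
  | succ i =>
    induction s using Fin.cases with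
    | zero => exact pd_lift_right0 gb 0 i.succ x
    | succ j =>
      have h : (fun x : Fin (n+1) → ℝ => liftMetric gb x i.succ j.succ)
          = fun x => gb (sp x) i j := by
        funext z; exact lm_ss gb z i j
      rw [h]
      exact pd_comp_sp_zero ((hg i j).differentiableAt)

lemma pd_lift_ss_succ (hg : ∀ i j, Differentiable ℝ (fun y => gb y i j))
    (i j k : Fin n) (x : Fin (n+1) → ℝ) :
    pd k.succ (fun x => liftMetric gb x i.succ j.succ) x = pd k (fun y => gb y i j) (sp x) := by
  have h : (fun x : Fin (n+1) → ℝ => liftMetric gb x i.succ j.succ)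
      = fun x => gb (sp x) i j := by
    funext z; exact lm_ss gb z i j
  rw [h]
  exact pd_comp_sp_succ ((hg i j).differentiableAt) k

lemma ch_lift_i0 (hg : ∀ i j, Differentiable ℝ (fun y => gb y i j))
    (l j : Fin (n+1)) (x : Fin (n+1) → ℝ) :
    christoffel (liftMetric gb) (liftMetric gbinv) l 0 j x = 0 := by
  rw [christoffel]
  have h : ∀ r : Fin (n+1),
      pd (0 : Fin (n+1)) (fun x => liftMetric gb x r j) x
        + pd j (fun x => liftMetric gb x r 0) x
        - pd r (fun x => liftMetric gb x 0 j) x = 0 := by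
    intro r
    rw [pd_lift_time hg, pd_lift_right0, pd_lift_left0]; ring
  rw [Finset.sum_congr rfl fun r _ => by rw [h r, mul_zero]]
  simp

lemma ch_lift_j0 (hg : ∀ i j, Differentiable ℝ (fun y => gb y i j))
    (l i : Fin (n+1)) (x : Fin (n+1) → ℝ) :
    christoffel (liftMetric gb) (liftMetric gbinv) l i 0 x = 0 := by
  rw [christoffel]
  have h : ∀ r : Fin (n+1),
      pd i (fun x => liftMetric gb x r 0) x
        + pd (0 : Fin (n+1)) (fun x => liftMetric gb x r i) x
        - pd r (fun x => liftMetric gb x i 0) x = 0 := by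
    intro r
    rw [pd_lift_time hg, pd_lift_right0, pd_lift_right0]; ring
  rw [Finset.sum_congr rfl fun r _ => by rw [h r, mul_zero]]
  simp

lemma ch_lift_l0 (hg : ∀ i j, Differentiable ℝ (fun y => gb y i j))
    (i j : Fin (n+1)) (x : Fin (n+1) → ℝ) :
    christoffel (liftMetric gb) (liftMetric gbinv) 0 i j x = 0 := by
  rw [christoffel, Fin.sum_univ_succ]
  have h0 : pd i (fun x => liftMetric gb x 0 j) x
      + pd j (fun x => liftMetric gb x 0 i) x
      - pd (0 : Fin (n+1)) (fun x => liftMetric gb x i j) x = 0 := by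
    rw [pd_lift_time hg, pd_lift_left0, pd_lift_left0]; ring
  rw [h0, mul_zero]
  have hz : ∀ r : Fin n, liftMetric gbinv x 0 r.succ = 0 := fun r => lm_0s gbinv x r
  rw [Finset.sum_congr rfl fun r _ => by rw [hz r, zero_mul]]
  simp

lemma ch_lift_succ (hg : ∀ i j, Differentiable ℝ (fun y => gb y i j))
    (l i j : Fin n) (x : Fin (n+1) → ℝ) :
    christoffel (liftMetric gb) (liftMetric gbinv) l.succ i.succ j.succ x
      = christoffel gb gbinv l i j (sp x) := by
  rw [christoffel, christoffel, Fin.sum_univ_succ, lm_s0, zero_mul, zero_add]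
  congr 1
  refine Finset.sum_congr rfl fun r _ => ?_
  rw [lm_ss, pd_lift_ss_succ hg, pd_lift_ss_succ hg, pd_lift_ss_succ hg]

lemma uvec_zero (x : Fin (n+1) → ℝ) : uvec gb v x 0 = lorentz gb v (sp x) := by simp [uvec]

lemma uvec_succ (x : Fin (n+1) → ℝ) (i : Fin n) :
    uvec gb v x i.succ = lorentz gb v (sp x) * v (sp x) i := by simp [uvec]

lemma lorentz_diff (hg : ∀ i j, Differentiable ℝ (fun y => gb y i j))
    (hv : ∀ i, Differentiable ℝ (fun y => v y i))
    (hvlt : ∀ y, vsq gb v y < 1) :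
    Differentiable ℝ (lorentz gb v) := by
  intro y
  have hS : 0 < 1 - vsq gb v y := by linarith [hvlt y]
  have h1 : DifferentiableAt ℝ (fun z => 1 - vsq gb v z) y :=
    (differentiable_const 1).sub (vsq_diff hg hv) y
  have h2 : DifferentiableAt ℝ (fun z => Real.sqrt (1 - vsq gb v z)) y := h1.sqrt hS.ne'
  exact h2.inv (Real.sqrt_pos.mpr hS).ne'

lemma cov_time (hg : ∀ i j, Differentiable ℝ (fun y => gb y i j))
    (hv : ∀ i, Differentiable ℝ (fun y => v y i))
    (hvlt : ∀ y, vsq gb v y < 1)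
    (μ : Fin (n+1)) (x : Fin (n+1) → ℝ) :
    covDerivVec (liftMetric gb) (liftMetric gbinv) (uvec gb v) 0 μ x = 0 := by
  rw [covDerivVec]
  have hΓ : ∀ r : Fin (n+1),
      christoffel (liftMetric gb) (liftMetric gbinv) μ 0 r x = 0 := fun r => ch_lift_i0 hg μ r x
  rw [Finset.sum_congr rfl fun r _ => by rw [hΓ r, zero_mul]]
  rw [Finset.sum_const_zero, add_zero]
  induction μ using Fin.cases with
  | zero =>
    have h : (fun x : Fin (n+1) → ℝ => uvec gb v x 0) = fun x => lorentz gb v (sp x) := by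
      funext z; exact uvec_zero z
    rw [h]
    exact pd_comp_sp_zero ((lorentz_diff hg hv hvlt).differentiableAt)
  | succ j =>
    have h : (fun x : Fin (n+1) → ℝ => uvec gb v x j.succ)
        = fun x => (fun y => lorentz gb v y * v y j) (sp x) := by
      funext z; exact uvec_succ z j
    rw [h]
    exact pd_comp_sp_zero (((lorentz_diff hg hv hvlt).mul (hv j)).differentiableAt)

lemma cov_s0 (hg : ∀ i j, Differentiable ℝ (fun y => gb y i j))
    (hv : ∀ i, Differentiable ℝ (fun y => v y i))
    (hvlt : ∀ y, vsq gb v y < 1)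
    (k : Fin n) (x : Fin (n+1) → ℝ) :
    covDerivVec (liftMetric gb) (liftMetric gbinv) (uvec gb v) k.succ 0 x
      = pd k (lorentz gb v) (sp x) := by
  rw [covDerivVec]
  have hΓ : ∀ r : Fin (n+1),
      christoffel (liftMetric gb) (liftMetric gbinv) 0 k.succ r x = 0 :=
    fun r => ch_lift_l0 hg k.succ r x
  rw [Finset.sum_congr rfl fun r _ => by rw [hΓ r, zero_mul]]
  rw [Finset.sum_const_zero, add_zero]
  have h : (fun x : Fin (n+1) → ℝ => uvec gb v x 0) = fun x => lorentz gb v (sp x) := by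
    funext z; exact uvec_zero z
  rw [h]
  exact pd_comp_sp_succ ((lorentz_diff hg hv hvlt).differentiableAt) k

lemma cov_ss (hg : ∀ i j, Differentiable ℝ (fun y => gb y i j))
    (hv : ∀ i, Differentiable ℝ (fun y => v y i))
    (hvlt : ∀ y, vsq gb v y < 1)
    (k j : Fin n) (x : Fin (n+1) → ℝ) :
    covDerivVec (liftMetric gb) (liftMetric gbinv) (uvec gb v) k.succ j.succ x
      = pd k (fun y => lorentz gb v y * v y j) (sp x)
        + lorentz gb v (sp x) * ∑ r, christoffel gb gbinv j k r (sp x) * v (sp x) r := by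
  rw [covDerivVec, Fin.sum_univ_succ]
  rw [ch_lift_j0 hg, zero_mul, zero_add]
  have h : (fun x : Fin (n+1) → ℝ => uvec gb v x j.succ)
      = fun x => (fun y => lorentz gb v y * v y j) (sp x) := by
    funext z; exact uvec_succ z j
  rw [h, pd_comp_sp_succ (((lorentz_diff hg hv hvlt).fun_mul (hv j)).differentiableAt) k]
  congr 1
  rw [Finset.mul_sum]
  refine Finset.sum_congr rfl fun r _ => ?_
  rw [ch_lift_succ hg, uvec_succ]
  ring

end Lift
section Accel
variable {n : ℕ} {gb gbinv : (Fin n → ℝ) → Matrix (Fin n) (Fin n) ℝ}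
  {v : (Fin n → ℝ) → Fin n → ℝ}

lemma killing_vvK (hkilling : IsKilling gb gbinv v) (y : Fin n → ℝ) :
    ∑ i, ∑ k, v y i * v y k * covDerivCovec gb gbinv (flat gb v) i k y = 0 := by
  have hanti : ∀ i k, covDerivCovec gb gbinv (flat gb v) i k y
      = -covDerivCovec gb gbinv (flat gb v) k i y := by
    intro i k
    have := hkilling y i k
    linarith
  have h1 : ∑ i, ∑ k, v y i * v y k * covDerivCovec gb gbinv (flat gb v) i k y
      = -∑ i, ∑ k, v y i * v y k * covDerivCovec gb gbinv (flat gb v) k i y := by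
    rw [← Finset.sum_neg_distrib]
    refine Finset.sum_congr rfl fun i _ => ?_
    rw [← Finset.sum_neg_distrib]
    refine Finset.sum_congr rfl fun k _ => ?_
    rw [hanti i k]; ring
  have h2 : ∑ i, ∑ k, v y i * v y k * covDerivCovec gb gbinv (flat gb v) k i y
      = ∑ i, ∑ k, v y i * v y k * covDerivCovec gb gbinv (flat gb v) i k y := by
    rw [Finset.sum_comm]
    exact Finset.sum_congr rfl fun i _ => Finset.sum_congr rfl fun k _ => by ring
  rw [h2] at h1
  linarith

lemma v_pd_lorentz (hinv : ∀ y, gb y * gbinv y = 1)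
    (hsymm : ∀ (a b : Fin n), (fun z => gb z a b) = (fun z => gb z b a))
    (hg : ∀ i j, Differentiable ℝ (fun y => gb y i j))
    (hv : ∀ i, Differentiable ℝ (fun y => v y i))
    (hvlt : ∀ y, vsq gb v y < 1)
    (hkilling : IsKilling gb gbinv v) (y : Fin n → ℝ) :
    ∑ i, v y i * pd i (lorentz gb v) y = 0 := by
  have expand : ∑ i, v y i * pd i (lorentz gb v) y
      = (lorentz gb v y)^3
        * ∑ i, ∑ k, v y i * v y k * covDerivCovec gb gbinv (flat gb v) i k y := by
    rw [Finset.mul_sum]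
    refine Finset.sum_congr rfl fun i _ => ?_
    rw [lorentz_pd hg hv hvlt y i, pd_vsq hinv hsymm hg hv y i]
    trans ((lorentz gb v y)^3
      * (v y i * ∑ k, v y k * covDerivCovec gb gbinv (flat gb v) i k y))
    · ring
    rw [Finset.mul_sum]
    congr 1
    exact Finset.sum_congr rfl fun k _ => by ring
  rw [expand, killing_vvK hkilling y, mul_zero]

lemma pd_lorentz_eq (hinv : ∀ y, gb y * gbinv y = 1)
    (hsymm : ∀ (a b : Fin n), (fun z => gb z a b) = (fun z => gb z b a))
    (hg : ∀ i j, Differentiable ℝ (fun y => gb y i j))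
    (hv : ∀ i, Differentiable ℝ (fun y => v y i))
    (hvlt : ∀ y, vsq gb v y < 1) (y : Fin n → ℝ) (j : Fin n) :
    pd j (lorentz gb v) y = (lorentz gb v y)^3
      * ∑ m, v y m * covDerivCovec gb gbinv (flat gb v) j m y := by
  rw [lorentz_pd hg hv hvlt y j, pd_vsq hinv hsymm hg hv y j]
  ring

lemma accel_time (hinv : ∀ y, gb y * gbinv y = 1)
    (hsymm : ∀ (a b : Fin n), (fun z => gb z a b) = (fun z => gb z b a))
    (hg : ∀ i j, Differentiable ℝ (fun y => gb y i j))
    (hv : ∀ i, Differentiable ℝ (fun y => v y i))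
    (hvlt : ∀ y, vsq gb v y < 1)
    (hkilling : IsKilling gb gbinv v) (x : Fin (n+1) → ℝ) :
    accel (liftMetric gb) (liftMetric gbinv) (uvec gb v) 0 x = 0 := by
  rw [accel, Fin.sum_univ_succ, cov_time hg hv hvlt 0 x, mul_zero, zero_add]
  have h : ∀ k : Fin n, uvec gb v x k.succ
      * covDerivVec (liftMetric gb) (liftMetric gbinv) (uvec gb v) k.succ 0 x
      = lorentz gb v (sp x) * (v (sp x) k * pd k (lorentz gb v) (sp x)) := by
    intro k
    rw [uvec_succ, cov_s0 hg hv hvlt]; ring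
  rw [Finset.sum_congr rfl fun k _ => h k, ← Finset.mul_sum,
    v_pd_lorentz hinv hsymm hg hv hvlt hkilling (sp x), mul_zero]

lemma accel_succ (hinv : ∀ y, gb y * gbinv y = 1)
    (hsymm : ∀ (a b : Fin n), (fun z => gb z a b) = (fun z => gb z b a))
    (hg : ∀ i j, Differentiable ℝ (fun y => gb y i j))
    (hv : ∀ i, Differentiable ℝ (fun y => v y i))
    (hvlt : ∀ y, vsq gb v y < 1)
    (hkilling : IsKilling gb gbinv v) (j : Fin n) (x : Fin (n+1) → ℝ) :
    accel (liftMetric gb) (liftMetric gbinv) (uvec gb v) j.succ x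
      = (lorentz gb v (sp x))^2
        * ∑ k, v (sp x) k * covDerivVec gb gbinv v k j (sp x) := by
  rw [accel, Fin.sum_univ_succ, cov_time hg hv hvlt j.succ x, mul_zero, zero_add]
  have h : ∀ k : Fin n, uvec gb v x k.succ
      * covDerivVec (liftMetric gb) (liftMetric gbinv) (uvec gb v) k.succ j.succ x
      = lorentz gb v (sp x) * v (sp x) j * (v (sp x) k * pd k (lorentz gb v) (sp x))
        + (lorentz gb v (sp x))^2 * (v (sp x) k * covDerivVec gb gbinv v k j (sp x)) := by
    intro k
    rw [uvec_succ, cov_ss hg hv hvlt,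
      pd_mul ((lorentz_diff hg hv hvlt).differentiableAt) ((hv j).differentiableAt) k,
      covDerivVec]
    ring
  rw [Finset.sum_congr rfl fun k _ => h k, Finset.sum_add_distrib, ← Finset.mul_sum,
    ← Finset.mul_sum, v_pd_lorentz hinv hsymm hg hv hvlt hkilling (sp x), mul_zero, zero_add]

lemma accelLow_time (hinv : ∀ y, gb y * gbinv y = 1)
    (hsymm : ∀ (a b : Fin n), (fun z => gb z a b) = (fun z => gb z b a))
    (hg : ∀ i j, Differentiable ℝ (fun y => gb y i j))
    (hv : ∀ i, Differentiable ℝ (fun y => v y i))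
    (hvlt : ∀ y, vsq gb v y < 1)
    (hkilling : IsKilling gb gbinv v) (x : Fin (n+1) → ℝ) :
    accelLow (liftMetric gb) (liftMetric gbinv) (uvec gb v) 0 x = 0 := by
  rw [accelLow, Fin.sum_univ_succ, lm_00,
    accel_time hinv hsymm hg hv hvlt hkilling x, mul_zero]
  have h : ∀ r : Fin n, liftMetric gb x 0 r.succ
      * accel (liftMetric gb) (liftMetric gbinv) (uvec gb v) r.succ x = 0 := by
    intro r; rw [lm_0s, zero_mul]
  rw [Finset.sum_congr rfl fun r _ => h r]
  simp

lemma accelLow_succ (hinv : ∀ y, gb y * gbinv y = 1)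
    (hsymm : ∀ (a b : Fin n), (fun z => gb z a b) = (fun z => gb z b a))
    (hg : ∀ i j, Differentiable ℝ (fun y => gb y i j))
    (hv : ∀ i, Differentiable ℝ (fun y => v y i))
    (hvlt : ∀ y, vsq gb v y < 1)
    (hkilling : IsKilling gb gbinv v) (j : Fin n) (x : Fin (n+1) → ℝ) :
    lorentz gb v (sp x)
      * accelLow (liftMetric gb) (liftMetric gbinv) (uvec gb v) j.succ x
      = - pd j (lorentz gb v) (sp x) := by
  have hexp : accelLow (liftMetric gb) (liftMetric gbinv) (uvec gb v) j.succ x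
      = -((lorentz gb v (sp x))^2
          * ∑ m, v (sp x) m * covDerivCovec gb gbinv (flat gb v) j m (sp x)) := by
    rw [accelLow, Fin.sum_univ_succ, lm_s0, zero_mul, zero_add]
    calc ∑ k : Fin n, liftMetric gb x j.succ k.succ
          * accel (liftMetric gb) (liftMetric gbinv) (uvec gb v) k.succ x
        = ∑ k : Fin n, ∑ m : Fin n, ((lorentz gb v (sp x))^2 * v (sp x) m)
            * (gb (sp x) j k * covDerivVec gb gbinv v m k (sp x)) := by
          refine Finset.sum_congr rfl fun k _ => ?_
          rw [lm_ss, accel_succ hinv hsymm hg hv hvlt hkilling k x, Finset.mul_sum,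
            Finset.mul_sum]
          exact Finset.sum_congr rfl fun m _ => by ring
      _ = ∑ m, ∑ k, ((lorentz gb v (sp x))^2 * v (sp x) m)
            * (gb (sp x) j k * covDerivVec gb gbinv v m k (sp x)) := Finset.sum_comm
      _ = ∑ m, ((lorentz gb v (sp x))^2 * v (sp x) m)
            * ∑ k, gb (sp x) j k * covDerivVec gb gbinv v m k (sp x) :=
          Finset.sum_congr rfl fun m _ => (Finset.mul_sum _ _ _).symm
      _ = ∑ m, ((lorentz gb v (sp x))^2 * v (sp x) m)
            * covDerivCovec gb gbinv (flat gb v) m j (sp x) :=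
          Finset.sum_congr rfl fun m _ => by
            rw [← lower_covDeriv hinv hsymm hg hv (sp x) m j]
      _ = -((lorentz gb v (sp x))^2
            * ∑ m, v (sp x) m * covDerivCovec gb gbinv (flat gb v) j m (sp x)) := by
          rw [Finset.mul_sum, ← Finset.sum_neg_distrib]
          refine Finset.sum_congr rfl fun m _ => ?_
          have hmj : covDerivCovec gb gbinv (flat gb v) m j (sp x)
              = -covDerivCovec gb gbinv (flat gb v) j m (sp x) := by
            have := hkilling (sp x) m j
            linarith
          rw [hmj]; ring
  rw [hexp, pd_lorentz_eq hinv hsymm hg hv hvlt (sp x) j]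
  ring

end Accel

end HFaux

open HFaux

/-- **Proposition 3**: for a stationary, shearless, incompressible flow
u^μ = γ(1,v^i) (v Killing) on an ultrastatic spacetime, if the heat flux
vanishes (κ ≠ 0) then 𝒯 = τ γ for a constant τ. -/
theorem heat_flux_vanishes_implies_temperature_prop_gamma {n : ℕ} (hn : 1 ≤ n)
    (gb gbinv : (Fin n → ℝ) → Matrix (Fin n) (Fin n) ℝ)
    (hg : ∀ i j, ContDiff ℝ (⊤ : ℕ∞) (fun y => gb y i j))
    (hginv : ∀ i j, ContDiff ℝ (⊤ : ℕ∞) (fun y => gbinv y i j))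
    (hpos : ∀ y, (gb y).PosDef)
    (hinv : ∀ y, gb y * gbinv y = 1)
    (v : (Fin n → ℝ) → Fin n → ℝ)
    (hv : ∀ i, ContDiff ℝ (⊤ : ℕ∞) (fun y => v y i))
    (hvlt : ∀ y, vsq gb v y < 1)
    (hkilling : IsKilling gb gbinv v)
    (κ : ℝ) (hκ : κ ≠ 0)
    (T : (Fin n → ℝ) → ℝ) (hT : ContDiff ℝ (⊤ : ℕ∞) T)
    (hq : ∀ (x : Fin (n+1) → ℝ) (μ : Fin (n+1)),
        heatFlux κ (liftMetric gb) (liftMetric gbinv) (uvec gb v)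
          (fun y => T (sp y)) μ x = 0) :
    ∃ τ : ℝ, ∀ y : Fin n → ℝ, T y = τ * lorentz gb v y := by
  classical
  have hgd : ∀ i j, Differentiable ℝ (fun y => gb y i j) :=
    fun i j => (hg i j).differentiable (by simp)
  have hvd : ∀ i, Differentiable ℝ (fun y => v y i) :=
    fun i => (hv i).differentiable (by simp)
  have hTd : Differentiable ℝ T := hT.differentiable (by simp)
  have hsymm : ∀ (a b : Fin n), (fun z => gb z a b) = (fun z => gb z b a) := by
    intro a b; funext z
    have h := (hpos z).1.apply b a
    simpa using h
  have hS : ∀ y, 0 < 1 - vsq gb v y := fun y => by linarith [hvlt y]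
  have hsqrt_pos : ∀ y, 0 < Real.sqrt (1 - vsq gb v y) := fun y => Real.sqrt_pos.mpr (hS y)
  have hlor : ∀ y, lorentz gb v y = (Real.sqrt (1 - vsq gb v y))⁻¹ := fun _ => rfl
  -- Step 1: from vanishing heat flux, derive γ ∂T = ∂γ T pointwise
  have key : ∀ (y : Fin n → ℝ) (k : Fin n),
      lorentz gb v y * pd k T y = pd k (lorentz gb v) y * T y := by
    intro y k
    set x0 : Fin (n+1) → ℝ := (Fin.cases 0 y : Fin (n+1) → ℝ) with hx0
    have hsp : sp x0 = y := by
      funext i; simp [sp, hx0]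
    set w : Fin n → ℝ := fun m => pd m T y
      + accelLow (liftMetric gb) (liftMetric gbinv) (uvec gb v) m.succ x0 * T y with hw
    have hqzero : ∀ j : Fin n,
        ∑ m, (gbinv y j m + (lorentz gb v y * v y j) * (lorentz gb v y * v y m)) * w m
          = 0 := by
      intro j
      have h := hq x0 j.succ
      simp only [heatFlux] at h
      have hκ2 : (-κ) ≠ 0 := neg_ne_zero.mpr hκ
      have hsum := (mul_eq_zero.mp h).resolve_left hκ2
      rw [Fin.sum_univ_succ] at hsum
      have htime : pd (0 : Fin (n+1)) (fun z => T (sp z)) x0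
          + accelLow (liftMetric gb) (liftMetric gbinv) (uvec gb v) 0 x0 * T (sp x0)
            = 0 := by
        rw [pd_comp_sp_zero (hTd.differentiableAt),
          accelLow_time hinv hsymm hgd hvd hvlt hkilling x0]
        ring
      rw [htime, mul_zero, zero_add] at hsum
      refine Eq.trans (Finset.sum_congr rfl fun m _ => ?_) hsum
      rw [proj, lm_ss, uvec_succ, uvec_succ,
        pd_comp_sp_succ (hTd.differentiableAt) m, hsp]
    -- positivity argument forces w = 0
    have hpdinv : (gbinv y).PosDef := by
      have h1 : (gb y)⁻¹ = gbinv y := Matrix.inv_eq_right_inv (hinv y)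
      rw [← h1]
      exact (hpos y).inv
    have hwzero : w = 0 := by
      by_contra hne
      have hQ : 0 < ∑ j, w j * ∑ m, gbinv y j m * w m := by
        have h := hpdinv.dotProduct_mulVec_pos hne
        simpa [dotProduct, Matrix.mulVec] using h
      have hrow : ∀ j, ∑ m, (gbinv y j m
            + (lorentz gb v y * v y j) * (lorentz gb v y * v y m)) * w m
          = (∑ m, gbinv y j m * w m)
            + (lorentz gb v y)^2 * v y j * ∑ m, v y m * w m := by
        intro j
        calc ∑ m, (gbinv y j m
              + (lorentz gb v y * v y j) * (lorentz gb v y * v y m)) * w m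
            = ∑ m, (gbinv y j m * w m
              + (lorentz gb v y)^2 * v y j * (v y m * w m)) :=
              Finset.sum_congr rfl fun m _ => by ring
          _ = (∑ m, gbinv y j m * w m)
              + ∑ m, (lorentz gb v y)^2 * v y j * (v y m * w m) :=
              Finset.sum_add_distrib
          _ = (∑ m, gbinv y j m * w m)
              + (lorentz gb v y)^2 * v y j * ∑ m, v y m * w m := by
              rw [Finset.mul_sum]
      have hsum0 : ∑ j, w j * (∑ m, (gbinv y j m
            + (lorentz gb v y * v y j) * (lorentz gb v y * v y m)) * w m) = 0 := by
        rw [Finset.sum_congr rfl fun j _ => by rw [hqzero j, mul_zero]]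
        simp
      have hexpand : ∑ j, w j * (∑ m, (gbinv y j m
            + (lorentz gb v y * v y j) * (lorentz gb v y * v y m)) * w m)
          = (∑ j, w j * ∑ m, gbinv y j m * w m)
            + (lorentz gb v y)^2 * (∑ j, v y j * w j)^2 := by
        calc ∑ j, w j * (∑ m, (gbinv y j m
              + (lorentz gb v y * v y j) * (lorentz gb v y * v y m)) * w m)
            = ∑ j, (w j * ∑ m, gbinv y j m * w m
              + ((lorentz gb v y)^2 * ∑ m, v y m * w m) * (v y j * w j)) := by
              refine Finset.sum_congr rfl fun j _ => ?_
              rw [hrow j]; ring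
          _ = (∑ j, w j * ∑ m, gbinv y j m * w m)
              + ∑ j, ((lorentz gb v y)^2 * ∑ m, v y m * w m) * (v y j * w j) :=
              Finset.sum_add_distrib
          _ = (∑ j, w j * ∑ m, gbinv y j m * w m)
              + (lorentz gb v y)^2 * (∑ j, v y j * w j)^2 := by
              rw [← Finset.mul_sum]; ring
      rw [hexpand] at hsum0
      have hge : 0 ≤ (lorentz gb v y)^2 * (∑ j, v y j * w j)^2 := by positivity
      linarith
    have hwk : pd k T y
        + accelLow (liftMetric gb) (liftMetric gbinv) (uvec gb v) k.succ x0 * T y = 0 := by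
      have := congrFun hwzero k
      simpa [hw] using this
    have hacc := accelLow_succ hinv hsymm hgd hvd hvlt hkilling k x0
    rw [hsp] at hacc
    have hT' : pd k T y
        = -(accelLow (liftMetric gb) (liftMetric gbinv) (uvec gb v) k.succ x0 * T y) := by
      linarith
    calc lorentz gb v y * pd k T y
        = -(lorentz gb v y
            * accelLow (liftMetric gb) (liftMetric gbinv) (uvec gb v) k.succ x0) * T y := by
          rw [hT']; ring
      _ = pd k (lorentz gb v) y * T y := by rw [hacc]; ring
  -- Step 2: T * sqrt(1 - v²) is constant
  have hsqd : ∀ y, DifferentiableAt ℝ (fun z => Real.sqrt (1 - vsq gb v z)) y := by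
    intro y
    exact (((differentiable_const (1:ℝ)).sub (vsq_diff hgd hvd)) y).sqrt (hS y).ne'
  have hfd : Differentiable ℝ (fun z => T z * Real.sqrt (1 - vsq gb v z)) :=
    fun y => (hTd y).mul (hsqd y)
  have hsq_pd : ∀ (y : Fin n → ℝ) (k : Fin n),
      pd k (fun z => Real.sqrt (1 - vsq gb v z)) y
        = -(1 - vsq gb v y) * pd k (lorentz gb v) y := by
    intro y k
    have h1 : HasFDerivAt (fun z => 1 - vsq gb v z) (-(fderiv ℝ (vsq gb v) y)) y :=
      ((vsq_diff hgd hvd) y).hasFDerivAt.const_sub 1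
    have h2 := h1.sqrt (hS y).ne'
    rw [pd_eq_of_hasFDerivAt h2 k, lorentz_pd hgd hvd hvlt y k]
    have hvsqpd : pd k (vsq gb v) y = (fderiv ℝ (vsq gb v) y) (Pi.single k 1) := rfl
    simp only [ContinuousLinearMap.smul_apply, ContinuousLinearMap.neg_apply, ← hvsqpd]
    rw [hlor y]
    have hss : Real.sqrt (1 - vsq gb v y) * Real.sqrt (1 - vsq gb v y) = 1 - vsq gb v y :=
      Real.mul_self_sqrt (hS y).le
    rw [← hss]
    generalize hP : pd k (vsq gb v) y = P
    have hs0 := hsqrt_pos y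
    generalize hs : Real.sqrt (1 - vsq gb v y) = s at hs0 ⊢
    rw [Real.sqrt_mul_self hs0.le]
    field_simp
    ring_nf
    rw [mul_comm s P, mul_inv_cancel_right₀ hs0.ne']
  have hfderiv : ∀ y, fderiv ℝ (fun z => T z * Real.sqrt (1 - vsq gb v z)) y = 0 := by
    intro y
    apply clm_eq_zero_of_single
    intro k
    have hsingle : fderiv ℝ (fun z => T z * Real.sqrt (1 - vsq gb v z)) y (Pi.single k 1)
        = pd k (fun z => T z * Real.sqrt (1 - vsq gb v z)) y := rfl
    rw [hsingle, pd_mul (hTd.differentiableAt) (hsqd y) k, hsq_pd y k]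
    have hkey := key y k
    have hγne : lorentz gb v y ≠ 0 := by
      rw [hlor y]
      exact inv_ne_zero (hsqrt_pos y).ne'
    have hpdT : pd k T y
        = pd k (lorentz gb v) y * T y * Real.sqrt (1 - vsq gb v y) := by
      have hmul : lorentz gb v y * Real.sqrt (1 - vsq gb v y) = 1 := by
        rw [hlor y]
        exact inv_mul_cancel₀ (hsqrt_pos y).ne'
      calc pd k T y
          = (lorentz gb v y * Real.sqrt (1 - vsq gb v y)) * pd k T y := by
            rw [hmul]; ring
        _ = (lorentz gb v y * pd k T y) * Real.sqrt (1 - vsq gb v y) := by ring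
        _ = pd k (lorentz gb v) y * T y * Real.sqrt (1 - vsq gb v y) := by rw [hkey]
    rw [hpdT]
    have hss : Real.sqrt (1 - vsq gb v y) * Real.sqrt (1 - vsq gb v y) = 1 - vsq gb v y :=
      Real.mul_self_sqrt (hS y).le
    linear_combination (pd k (lorentz gb v) y * T y) * hss
  have hconst := is_const_of_fderiv_eq_zero hfd hfderiv
  refine ⟨T 0 * Real.sqrt (1 - vsq gb v 0), fun y => ?_⟩
  have hcy : T y * Real.sqrt (1 - vsq gb v y) = T 0 * Real.sqrt (1 - vsq gb v 0) :=
    hconst y 0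
  rw [hlor y, ← hcy, mul_assoc, mul_inv_cancel₀ (hsqrt_pos y).ne', mul_one]

end
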